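/- Let m ≥ 2 be a positive integer and let S_m be the set of positive integers all of whose prime factors divide m. For every positive integer n, real β > 1, and real γ > 0, ∑_{k ∈ S_m} σ_{-γ}(n;k)·λ(k)/k^β = ∏_{j=0}^{n-1} 1/σ_{-(β+jγ)}(rad(m)), where λ is the Liouville function and rad(m) is the radical of m. -/

import Mathlib

noncomputable def sigmaNeg (γ : ℝ) (k : ℕ) : ℝ := ∑ d ∈ k.divisors, (d : ℝ) ^ (-γ)

/-- The radical of `k`: the product of the distinct primes dividing `k`. -/
def rad (k : ℕ) : ℕ := ∏ p ∈ k.primeFactors, p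

/-- The D-shifted factorial σ_{-γ}(a;k): equal to `1` when `a = 1` (empty product),
and to `∏_{j=0}^{a-2} σ_{-γ}(k·rad(k)^j)/σ_{-γ}(rad(k)^j)` otherwise. -/
noncomputable def Dfac (γ : ℝ) (a k : ℕ) : ℝ :=
  ∏ j ∈ Finset.range (a - 1), sigmaNeg γ (k * rad k ^ j) / sigmaNeg γ (rad k ^ j)

/-- The Liouville function λ(k) = (-1)^{Ω(k)}. -/
noncomputable def liouville (k : ℕ) : ℝ := (-1) ^ (ArithmeticFunction.cardFactors k)

/-!
Both sides are Euler products over the primes dividing `m`. The summand is multiplicative, so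
the sum over `S_m` is `∏_{p ∣ m} ∑_a f(p^a)`. At a prime power, `σ_{-γ}(n; p^a)` is the Gaussian
binomial coefficient `[a + n - 1, n - 1]_q` with `q = p^{-γ}`, and `λ(p^a) / p^{aβ} = t^a` with
`t = -p^{-β}`, so the `q`-binomial theorem `∑_a [a + n - 1, n - 1]_q t^a = ∏_{j < n} (1 - t q^j)⁻¹`
evaluates the local factor as `∏_{j < n} (1 + p^{-(β + jγ)})⁻¹`. Finally
`σ_{-s}(rad m) = ∏_{p ∣ m} (1 + p^{-s})`.
-/

open Finset

section GaussBinom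

variable {K : Type*}

/-- `gaussBinom q n a` is the Gaussian binomial coefficient `[a + n, n]_q`. -/
def gaussBinom [Field K] (q : K) (n a : ℕ) : K :=
  ∏ j ∈ range n, (1 - q ^ (a + j + 1)) / (1 - q ^ (j + 1))

section Field

variable [Field K] {q : K}

@[simp] lemma gaussBinom_zero_left (q : K) (a : ℕ) : gaussBinom q 0 a = 1 := by
  simp [gaussBinom]

lemma gaussBinom_zero_right (hq : ∀ j, q ^ (j + 1) ≠ 1) (n : ℕ) : gaussBinom q n 0 = 1 :=
  prod_eq_one fun j _ => by rw [zero_add, div_self (sub_ne_zero.2 (hq j).symm)]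

lemma gaussBinom_succ_succ (hq : ∀ j, q ^ (j + 1) ≠ 1) (n a : ℕ) :
    gaussBinom q (n + 1) (a + 1) =
      q ^ (n + 1) * gaussBinom q (n + 1) a + gaussBinom q n (a + 1) := by
  have hD : ∀ j, 1 - q ^ (j + 1) ≠ 0 := fun j => sub_ne_zero.2 (hq j).symm
  have hshift : ∏ j ∈ range n, (1 - q ^ (a + (j + 1) + 1)) =
      ∏ j ∈ range n, (1 - q ^ (a + 1 + j + 1)) :=
    prod_congr rfl fun j _ => by ring_nf
  have hDprod := prod_ne_zero_iff.2 fun j (_ : j ∈ range n) => hD j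
  simp only [gaussBinom, prod_div_distrib]
  rw [prod_range_succ (fun j => 1 - q ^ (a + 1 + j + 1)),
    prod_range_succ' (fun j => 1 - q ^ (a + j + 1)), prod_range_succ (fun j => 1 - q ^ (j + 1)),
    hshift]
  have hDlast := hD n
  field_simp
  ring

end Field

variable [NormedField K] {q t : K}

lemma norm_gaussBinom_le (hq : ‖q‖ ≤ 1) (n a : ℕ) :
    ‖gaussBinom q n a‖ ≤ ∏ j ∈ range n, 2 / ‖1 - q ^ (j + 1)‖ := by
  rw [gaussBinom, norm_prod]
  refine prod_le_prod (fun _ _ => norm_nonneg _) fun j _ => ?_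
  rw [norm_div]
  refine div_le_div_of_nonneg_right ?_ (norm_nonneg _)
  calc ‖1 - q ^ (a + j + 1)‖ ≤ ‖(1 : K)‖ + ‖q ^ (a + j + 1)‖ := norm_sub_le _ _
    _ ≤ 1 + 1 := by rw [norm_one, norm_pow]; gcongr; exact pow_le_one₀ (norm_nonneg _) hq
    _ = 2 := one_add_one_eq_two

lemma summable_norm_gaussBinom_mul_pow (hq : ‖q‖ ≤ 1) (ht : ‖t‖ < 1) (n : ℕ) :
    Summable fun a => ‖gaussBinom q n a * t ^ a‖ := by
  refine Summable.of_nonneg_of_le (fun _ => norm_nonneg _) (fun a => ?_)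
    ((summable_geometric_of_lt_one (norm_nonneg t) ht).mul_left
      (∏ j ∈ range n, 2 / ‖1 - q ^ (j + 1)‖))
  rw [norm_mul, norm_pow]
  exact mul_le_mul_of_nonneg_right (norm_gaussBinom_le hq n a) (by positivity)

lemma pow_succ_ne_one_of_norm_lt_one (hq : ‖q‖ < 1) (j : ℕ) : q ^ (j + 1) ≠ 1 := fun h => by
  have := congrArg norm h
  rw [norm_pow, norm_one] at this
  exact (pow_lt_one₀ (norm_nonneg q) hq j.succ_ne_zero).ne this

/-- The `q`-binomial theorem. -/
theorem hasSum_gaussBinom_mul_pow [CompleteSpace K] (hq : ‖q‖ < 1) (ht : ‖t‖ < 1) (n : ℕ) :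
    HasSum (fun a => gaussBinom q n a * t ^ a) (∏ j ∈ range (n + 1), (1 - t * q ^ j)⁻¹) := by
  have hq' := pow_succ_ne_one_of_norm_lt_one hq
  have hasSum_succ {f : ℕ → K} {s : K} (h : HasSum f s) :
      HasSum (fun a => f (a + 1)) (s - f 0) := by
    simpa using (hasSum_nat_add_iff' 1).2 h
  induction n with
  | zero => simpa using hasSum_geometric_of_norm_lt_one ht
  | succ n ih =>
    obtain ⟨F, hF⟩ := (summable_norm_gaussBinom_mul_pow hq.le ht (n + 1)).of_norm
    -- By Pascal's rule, `(1 - t q^(n+1))` times the series for `n + 1` is the series for `n`.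
    have hpascal := (hF.mul_left (t * q ^ (n + 1))).add (hasSum_succ ih)
    have hrec := (hasSum_succ hF).unique (hpascal.congr_fun fun a => by
      rw [gaussBinom_succ_succ hq']; ring)
    simp only [gaussBinom_zero_right hq', pow_zero, mul_one] at hrec
    have hne : 1 - t * q ^ (n + 1) ≠ 0 := by
      have : ‖t * q ^ (n + 1)‖ < 1 := by
        rw [norm_mul, norm_pow]
        exact mul_lt_one_of_nonneg_of_lt_one_left (norm_nonneg t) ht
          (pow_le_one₀ (norm_nonneg q) hq.le)
      exact sub_ne_zero.2 fun h => by simp [← h] at this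
    have hF_eq : ∏ j ∈ range (n + 1 + 1), (1 - t * q ^ j)⁻¹ = F := by
      have hprod : ∏ j ∈ range (n + 1), (1 - t * q ^ j)⁻¹ = F * (1 - t * q ^ (n + 1)) := by
        linear_combination -hrec
      rw [prod_range_succ, hprod, mul_inv_cancel_right₀ hne]
    exact hF_eq ▸ hF

end GaussBinom

@[simp] lemma sigmaNeg_one (γ : ℝ) : sigmaNeg γ 1 = 1 := by
  simp [sigmaNeg]

lemma sigmaNeg_mul (γ : ℝ) {x y : ℕ} (h : x.Coprime y) :
    sigmaNeg γ (x * y) = sigmaNeg γ x * sigmaNeg γ y := by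
  rw [sigmaNeg, sigmaNeg, sigmaNeg, h.divisors_mul, sum_map, sum_mul_sum, ← sum_product',
    ← sum_attach (x.divisors ×ˢ y.divisors) fun d => (d.1 : ℝ) ^ (-γ) * (d.2 : ℝ) ^ (-γ)]
  refine sum_congr rfl fun d _ => ?_
  simp [Real.mul_rpow]

lemma sigmaNeg_prime {p : ℕ} (hp : p.Prime) (γ : ℝ) : sigmaNeg γ p = 1 + (p : ℝ) ^ (-γ) := by
  simp [sigmaNeg, hp.sum_divisors, add_comm]

lemma sigmaNeg_prime_pow {p : ℕ} (hp : p.Prime) (γ : ℝ) (k : ℕ) :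
    sigmaNeg γ (p ^ k) = ∑ i ∈ range (k + 1), ((p : ℝ) ^ (-γ)) ^ i := by
  simp only [sigmaNeg, Nat.sum_divisors_prime_pow hp, Nat.cast_pow,
    Real.rpow_pow_comm (Nat.cast_nonneg p)]

lemma sigmaNeg_rad (γ : ℝ) (k : ℕ) :
    sigmaNeg γ (rad k) = ∏ p ∈ k.primeFactors, (1 + (p : ℝ) ^ (-γ)) := by
  let σ : ArithmeticFunction ℝ := ⟨sigmaNeg γ, by simp [sigmaNeg]⟩
  have hσ : σ.IsMultiplicative := ⟨sigmaNeg_one γ, sigmaNeg_mul γ⟩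
  exact (hσ.map_prod_of_prime _ fun p hp => Nat.prime_of_mem_primeFactors hp).trans
    (prod_congr rfl fun p hp => sigmaNeg_prime (Nat.prime_of_mem_primeFactors hp) γ)

lemma rad_mul {x y : ℕ} (h : x.Coprime y) : rad (x * y) = rad x * rad y := by
  simp only [rad, h.primeFactors_mul, prod_union h.disjoint_primeFactors]

lemma rad_dvd (k : ℕ) : rad k ∣ k := Nat.prod_primeFactors_dvd k

lemma rad_prime_pow {p : ℕ} (hp : p.Prime) {a : ℕ} (ha : a ≠ 0) : rad (p ^ a) = p := by
  rw [rad, Nat.primeFactors_pow p ha, hp.primeFactors, prod_singleton]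

@[simp] lemma Dfac_one (γ : ℝ) (n : ℕ) : Dfac γ n 1 = 1 := by
  simp [Dfac, rad]

lemma Dfac_mul (γ : ℝ) (n : ℕ) {x y : ℕ} (h : x.Coprime y) :
    Dfac γ n (x * y) = Dfac γ n x * Dfac γ n y := by
  have hrad : (rad x).Coprime (rad y) :=
    (h.coprime_dvd_left (rad_dvd x)).coprime_dvd_right (rad_dvd y)
  have hshift (j : ℕ) : (x * rad x ^ j).Coprime (y * rad y ^ j) :=
    (h.mul_right ((h.coprime_dvd_right (rad_dvd y)).pow_right j)).mul_left
      (((h.coprime_dvd_left (rad_dvd x)).pow_left j).mul_right (hrad.pow j j))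
  simp only [Dfac, ← prod_mul_distrib]
  refine prod_congr rfl fun j _ => ?_
  rw [rad_mul h, mul_pow, mul_mul_mul_comm, sigmaNeg_mul γ (hshift j),
    sigmaNeg_mul γ (hrad.pow j j), div_mul_div_comm]

lemma liouville_mul {x y : ℕ} (hx : x ≠ 0) (hy : y ≠ 0) :
    liouville (x * y) = liouville x * liouville y := by
  rw [liouville, liouville, liouville, ArithmeticFunction.cardFactors_mul hx hy, pow_add]

lemma liouville_prime_pow {p : ℕ} (hp : p.Prime) (a : ℕ) : liouville (p ^ a) = (-1) ^ a := by
  rw [liouville, ArithmeticFunction.cardFactors_apply_prime_pow hp]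

lemma norm_prime_rpow_neg_lt_one {p : ℕ} (hp : p.Prime) {s : ℝ} (hs : 0 < s) :
    ‖(p : ℝ) ^ (-s)‖ < 1 := by
  rw [Real.norm_of_nonneg (by positivity)]
  exact Real.rpow_lt_one_of_one_lt_of_neg (by exact_mod_cast hp.one_lt) (neg_neg_of_pos hs)

lemma Dfac_prime_pow {p : ℕ} (hp : p.Prime) {γ : ℝ} (hγ : 0 < γ) (n a : ℕ) :
    Dfac γ n (p ^ a) = gaussBinom ((p : ℝ) ^ (-γ)) (n - 1) a := by
  have hq := pow_succ_ne_one_of_norm_lt_one (norm_prime_rpow_neg_lt_one hp hγ)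
  rcases eq_or_ne a 0 with rfl | ha
  · rw [pow_zero, Dfac_one, gaussBinom_zero_right hq]
  have hq1 : (p : ℝ) ^ (-γ) ≠ 1 := by simpa using hq 0
  refine prod_congr rfl fun j _ => ?_
  rw [rad_prime_pow hp ha, ← pow_add, sigmaNeg_prime_pow hp, sigmaNeg_prime_pow hp,
    geom_sum_eq hq1, geom_sum_eq hq1, div_div_div_cancel_right₀ (sub_ne_zero.2 hq1),
    ← neg_div_neg_eq, neg_sub, neg_sub]

noncomputable def dfacTerm (γ β : ℝ) (n k : ℕ) : ℝ := Dfac γ n k * liouville k / (k : ℝ) ^ β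

section DfacTerm

variable {γ β : ℝ} {n : ℕ}

@[simp] lemma dfacTerm_one : dfacTerm γ β n 1 = 1 := by
  simp [dfacTerm, liouville]

lemma dfacTerm_mul {x y : ℕ} (h : x.Coprime y) :
    dfacTerm γ β n (x * y) = dfacTerm γ β n x * dfacTerm γ β n y := by
  rcases eq_or_ne x 0 with rfl | hx
  · rw [(Nat.coprime_zero_left _).1 h, mul_one, dfacTerm_one, mul_one]
  rcases eq_or_ne y 0 with rfl | hy
  · rw [(Nat.coprime_zero_right _).1 h, one_mul, dfacTerm_one, one_mul]
  rw [dfacTerm, Dfac_mul γ n h, liouville_mul hx hy, Nat.cast_mul,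
    Real.mul_rpow (Nat.cast_nonneg _) (Nat.cast_nonneg _), mul_mul_mul_comm, mul_div_mul_comm]
  rfl

lemma dfacTerm_prime_pow {p : ℕ} (hp : p.Prime) (hγ : 0 < γ) (a : ℕ) :
    dfacTerm γ β n (p ^ a) = gaussBinom ((p : ℝ) ^ (-γ)) (n - 1) a * (-(p : ℝ) ^ (-β)) ^ a := by
  rw [dfacTerm, Dfac_prime_pow hp hγ, liouville_prime_pow hp, Nat.cast_pow,
    neg_pow ((p : ℝ) ^ (-β)), Real.rpow_pow_comm (Nat.cast_nonneg p),
    Real.rpow_neg (pow_nonneg (Nat.cast_nonneg p) a)]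
  ring

lemma summable_norm_dfacTerm_prime_pow {p : ℕ} (hp : p.Prime) (hγ : 0 < γ) (hβ : 0 < β) :
    Summable fun a => ‖dfacTerm γ β n (p ^ a)‖ := by
  simpa only [dfacTerm_prime_pow hp hγ] using summable_norm_gaussBinom_mul_pow
    (norm_prime_rpow_neg_lt_one hp hγ).le
    (by rw [norm_neg]; exact norm_prime_rpow_neg_lt_one hp hβ) (n - 1)

lemma hasSum_dfacTerm_prime_pow {p : ℕ} (hp : p.Prime) (hγ : 0 < γ) (hβ : 0 < β) (hn : 1 ≤ n) :
    HasSum (fun a => dfacTerm γ β n (p ^ a)) (∏ j ∈ range n, (1 + (p : ℝ) ^ (-(β + j * γ)))⁻¹) := by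
  have hp0 : (0 : ℝ) < p := by exact_mod_cast hp.pos
  have h := hasSum_gaussBinom_mul_pow (norm_prime_rpow_neg_lt_one hp hγ)
    (by rw [norm_neg]; exact norm_prime_rpow_neg_lt_one hp hβ) (n - 1)
  have hfactor (j : ℕ) :
      1 - -(p : ℝ) ^ (-β) * ((p : ℝ) ^ (-γ)) ^ j = 1 + (p : ℝ) ^ (-(β + j * γ)) := by
    rw [neg_mul, sub_neg_eq_add, ← Real.rpow_mul_natCast hp0.le, ← Real.rpow_add hp0]
    ring_nf
  rw [Nat.sub_add_cancel hn] at h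
  simpa only [dfacTerm_prime_pow hp hγ, hfactor] using h

end DfacTerm

lemma tsum_subtype_pnat_eq_tsum_factoredNumbers {α : Type*} [AddCommMonoid α] [TopologicalSpace α]
    {m : ℕ} (hm : m ≠ 0) (f : ℕ → α) :
    ∑' k : {k : ℕ+ // ∀ p : ℕ, p.Prime → p ∣ (k : ℕ) → p ∣ m}, f k =
      ∑' k : Nat.factoredNumbers m.primeFactors, f k := by
  let e : {k : ℕ+ // ∀ p : ℕ, p.Prime → p ∣ (k : ℕ) → p ∣ m} ≃ Nat.factoredNumbers m.primeFactors :=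
    { toFun k := ⟨k.1.1, Nat.mem_factoredNumbers'.2 fun p hp hpk =>
        Nat.mem_primeFactors.2 ⟨hp, k.2 p hp hpk, hm⟩⟩
      invFun k := ⟨⟨k.1, Nat.pos_of_ne_zero (Nat.ne_zero_of_mem_factoredNumbers k.2)⟩,
        fun p hp hpk => Nat.dvd_of_mem_primeFactors (Nat.mem_factoredNumbers'.1 k.2 p hp hpk)⟩
      left_inv _ := rfl
      right_inv _ := rfl }
  exact e.tsum_eq fun k => f k

theorem stmt9 (m : ℕ) (hm : 2 ≤ m) (n : ℕ) (hn : 1 ≤ n) (β γ : ℝ) (hβ : 1 < β) (hγ : 0 < γ) :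
    ∑' k : {k : ℕ+ // ∀ p : ℕ, p.Prime → p ∣ (k : ℕ) → p ∣ m},
        Dfac γ n (k : ℕ+) * liouville (k : ℕ+) / ((k : ℕ+) : ℝ) ^ β =
      ∏ j ∈ Finset.range n, (sigmaNeg (β + j * γ) (rad m))⁻¹ := by
  have hβ0 : 0 < β := by linarith
  have hprime : ∀ p ∈ m.primeFactors, p.Prime := fun p hp => Nat.prime_of_mem_primeFactors hp
  have euler := (EulerProduct.summable_and_hasSum_factoredNumbers_prod_filter_prime_tsum
    (dfacTerm_one (n := n)) dfacTerm_mul (summable_norm_dfacTerm_prime_pow · hγ hβ0)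
    m.primeFactors).2
  rw [filter_true_of_mem hprime, prod_congr rfl fun p hp =>
    (hasSum_dfacTerm_prime_pow (hprime p hp) hγ hβ0 hn).tsum_eq, prod_comm] at euler
  refine (tsum_subtype_pnat_eq_tsum_factoredNumbers (by omega) (dfacTerm γ β n)).trans ?_
  rw [euler.tsum_eq]
  simp only [← prod_inv_distrib, sigmaNeg_rad]
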